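/- Let α, b ≥ 0, let a₀, …, a_{N−1} ≥ 0 and R₁, …, R_{N−1} ≥ 0 be real numbers such that R_l ≤ √2 · √(∑_{k=0}^{l−1} a_k + bα ∑_{k=1}^{l−1} R_k) for all l = 1, …, N. Then for all l = 1, …, N, ∑_{k=0}^{l−1} a_k + bα ∑_{k=1}^{l−1} R_k ≤ (√(∑_{k=0}^{l−1} a_k) + √2 · bα · l)². -/

import Mathlib

/-!
Let `S_l` be the left-hand side and `A_l = ∑_{k<l} a_k`. Going from `l` to `l + 1` adds
`a_l + bα R_l ≤ a_l + √2 bα √S_l`. Once `√S_l ≤ √A_l + √2 bα l`, this increment is dominated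
by the growth of `(√A + √2 bα l)²` as `A` increases by `a_l` and `l` by one, which is the
induction step.
-/

lemma add_add_mul_le_sq_sqrt_add_mul_succ {A d S r c κ n : ℝ} (hA : 0 ≤ A) (hd : 0 ≤ d)
    (hc : 0 ≤ c) (hκ : 0 ≤ κ) (hn : 0 ≤ n) (hS : S ≤ (√A + κ * c * n) ^ 2)
    (hr : r ≤ κ * √S) :
    S + d + c * r ≤ (√(A + d) + κ * c * (n + 1)) ^ 2 := by
  set x := √A + κ * c * n
  have hsqrtS : √S ≤ x :=
    (Real.sqrt_le_sqrt hS).trans_eq (Real.sqrt_sq (by positivity))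
  have hmono : √A ≤ √(A + d) := Real.sqrt_le_sqrt (by linarith)
  have hsqA : √A ^ 2 = A := Real.sq_sqrt hA
  have hsqAd : √(A + d) ^ 2 = A + d := Real.sq_sqrt (by positivity)
  have hκc : 0 ≤ κ * c := by positivity
  calc S + d + c * r ≤ x ^ 2 + d + c * (κ * x) := by
        gcongr
        exact hr.trans (by gcongr)
    _ ≤ (√(A + d) + κ * c * (n + 1)) ^ 2 := by
        nlinarith [mul_le_mul_of_nonneg_left hmono (by positivity : 0 ≤ κ * c * (2 * n + 2)),
          Real.sqrt_nonneg A, mul_nonneg hκc hκc]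

theorem stmt_4_general (N : ℕ) (α b : ℝ) (a R : ℕ → ℝ)
    (hα : 0 ≤ α) (hb : 0 ≤ b)
    (ha : ∀ k, 0 ≤ a k)
    (hyp : ∀ l, 1 ≤ l → l ≤ N →
      R l ≤ Real.sqrt 2 * Real.sqrt (∑ k ∈ Finset.range l, a k +
        b * α * ∑ k ∈ Finset.Ico 1 l, R k)) :
    ∀ l, 1 ≤ l → l ≤ N →
      ∑ k ∈ Finset.range l, a k + b * α * ∑ k ∈ Finset.Ico 1 l, R k ≤
        (Real.sqrt (∑ k ∈ Finset.range l, a k) + Real.sqrt 2 * b * α * l) ^ 2 := by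
  have hbα : 0 ≤ b * α := mul_nonneg hb hα
  intro l hl
  induction l, hl using Nat.le_induction with
  | base =>
    intro _
    have hsqrt : √(a 0) ≤ √(a 0) + √2 * b * α := le_add_of_nonneg_right (by positivity)
    simpa [Real.sq_sqrt (ha 0)] using pow_le_pow_left₀ (Real.sqrt_nonneg _) hsqrt 2
  | succ l hl ih =>
    intro hN
    have hstep := add_add_mul_le_sq_sqrt_add_mul_succ (d := a l)
      (Finset.sum_nonneg fun k _ => ha k) (ha l) hbα (Real.sqrt_nonneg 2) (Nat.cast_nonneg l)
      (by simpa only [mul_assoc] using ih (by omega)) (hyp l hl (by omega))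
    rw [Finset.sum_range_succ, Finset.sum_Ico_succ_top hl]
    push_cast
    linarith

theorem stmt_4 (N : ℕ) (α b : ℝ) (a R : ℕ → ℝ)
    (hα : 0 ≤ α) (hb : 0 ≤ b)
    (ha : ∀ k, 0 ≤ a k) (hR : ∀ k, 0 ≤ R k)
    (hyp : ∀ l, 1 ≤ l → l ≤ N →
      R l ≤ Real.sqrt 2 * Real.sqrt (∑ k ∈ Finset.range l, a k +
        b * α * ∑ k ∈ Finset.Ico 1 l, R k)) :
    ∀ l, 1 ≤ l → l ≤ N →
      ∑ k ∈ Finset.range l, a k + b * α * ∑ k ∈ Finset.Ico 1 l, R k ≤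
        (Real.sqrt (∑ k ∈ Finset.range l, a k) + Real.sqrt 2 * b * α * l) ^ 2 :=
  stmt_4_general N α b a R hα hb ha hyp
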